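/- Let k be algebraically closed, char k ≠ 2, n = 2m, G = GL_n(k), σ an outer involution preserving the diagonal torus T and the upper triangular Borel B, acting on T by diag(t₁,…,tₙ) ↦ diag(tₙ⁻¹,…,t₁⁻¹). Two elements diag(a₁,…,a_m,a_m⁻¹,…,a₁⁻¹)·σ and diag(b₁,…,b_m,b_m⁻¹,…,b₁⁻¹)·σ of (T^σ)°·σ ⊆ G⋊⟨σ⟩ are G-conjugate if and only if the multiset {b̄₁,…,b̄_m} is obtained from {ā₁,…,ā_m} by the action generated by: interchanging a_i ↔ a_i⁻¹, replacing (a_i, a_i⁻¹) by (−a_i, −a_i⁻¹), and permuting indices; here z̄ denotes the orbit {z, −z, z⁻¹, −z⁻¹}. -/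
import Mathlib


open SemidirectProduct Matrix
open scoped MatrixGroups

/-- The antidiagonal permutation matrix `J₀`, `(J₀)_{ij} = δ_{i, n+1-j}`. -/
def J0 (k : Type*) [Field k] (m : ℕ) : Matrix (Fin (2 * m)) (Fin (2 * m)) k :=
  Matrix.of fun i j => if j = Fin.rev i then 1 else 0

/-- The vector `(a₁, …, a_m, a_m⁻¹, …, a₁⁻¹)` determined by `a ∈ (kˣ)^m`. -/
def dvec {k : Type*} [Field k] {m : ℕ} (a : Fin m → kˣ) : Fin (2 * m) → kˣ :=
  fun i =>
    if h : (i : ℕ) < m then a ⟨i, h⟩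
    else (a ⟨2 * m - 1 - (i : ℕ), by have := i.isLt; omega⟩)⁻¹

/-- The invertible diagonal matrix with diagonal entries a family of units. -/
def diagGL {k : Type*} [Field k] {n : ℕ} (d : Fin n → kˣ) : GL (Fin n) k :=
  ⟨Matrix.diagonal fun i => (d i : k),
   Matrix.diagonal fun i => ((d i)⁻¹ : kˣ),
   by rw [Matrix.diagonal_mul_diagonal]; simp,
   by rw [Matrix.diagonal_mul_diagonal]; simp⟩

/-! ### Auxiliary lemmas -/

lemma sdp_conj_iff {N G : Type*} [Group N] [Group G] (φ : G →* MulAut N)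
    (g dA dB : N) (τ : G) :
    (inl g * (inl dA * inr τ) * (inl g)⁻¹ = (inl dB * inr τ : N ⋊[φ] G))
      ↔ g * dA * (φ τ) g⁻¹ = dB := by
  constructor
  · intro h
    have h1 := congrArg SemidirectProduct.left h
    simpa [mul_left, mul_right, inv_left, ← map_inv] using h1
  · intro h
    ext
    · simpa [mul_left, mul_right, inv_left, ← map_inv] using h
    · simp [mul_left, mul_right, inv_right]

section Helpers
variable {k : Type*} [Field k] {m : ℕ}

lemma dvec_lt (a : Fin m → kˣ) (i : Fin (2*m)) (h : (i:ℕ) < m) :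
    dvec a i = a ⟨i, h⟩ := by simp [dvec, h]

lemma dvec_rev (a : Fin m → kˣ) (i : Fin (2*m)) :
    dvec a (Fin.rev i) = (dvec a i)⁻¹ := by
  have hi := i.isLt
  rcases lt_or_ge (i:ℕ) m with h | h
  · have h1 : ¬ ((Fin.rev i : ℕ) < m) := by rw [Fin.val_rev]; omega
    simp only [dvec, dif_neg h1, dif_pos h]
    congr 2
    ext
    simp [Fin.val_rev]; omega
  · have h0 : ¬ ((i:ℕ) < m) := by omega
    have h1 : (Fin.rev i : ℕ) < m := by rw [Fin.val_rev]; omega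
    simp only [dvec, dif_neg h0, dif_pos h1, inv_inv]
    congr 2
    simp [Fin.val_rev]; omega

lemma J0_mul_apply (B : Matrix (Fin (2*m)) (Fin (2*m)) k) (i j : Fin (2*m)) :
    (J0 k m * B) i j = B (Fin.rev i) j := by
  rw [Matrix.mul_apply]
  simp [J0]

lemma mul_J0_apply (B : Matrix (Fin (2*m)) (Fin (2*m)) k) (i j : Fin (2*m)) :
    (B * J0 k m) i j = B i (Fin.rev j) := by
  rw [Matrix.mul_apply]
  have : ∀ q : Fin (2*m), (j = Fin.rev q) = (q = Fin.rev j) := by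
    intro q
    simp only [eq_iff_iff]
    constructor <;> intro h <;> simp [h]
  simp [J0, this]

lemma J0_mul_J0 : (J0 k m) * J0 k m = 1 := by
  ext i j
  rw [J0_mul_apply]
  simp [J0, Matrix.one_apply, eq_comm]

end Helpers

def lo (m : ℕ) (j : Fin m) : Fin (2*m) := ⟨j, by have := j.isLt; omega⟩

def idx {m : ℕ} (i : Fin (2*m)) : Fin m :=
  if h : (i:ℕ) < m then ⟨i, h⟩ else ⟨2*m-1-i, by have := i.isLt; omega⟩

lemma idx_lo {m : ℕ} (j : Fin m) : idx (lo m j) = j := by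
  simp [idx, lo, j.isLt]

lemma lo_lt {m : ℕ} (j : Fin m) : ((lo m j : Fin (2*m)):ℕ) < m := j.isLt

lemma idx_rev {m : ℕ} (i : Fin (2*m)) : idx (Fin.rev i) = idx i := by
  have hi := i.isLt
  rcases lt_or_ge (i:ℕ) m with h | h
  · have h1 : ¬ ((Fin.rev i : ℕ) < m) := by rw [Fin.val_rev]; omega
    simp only [idx, dif_neg h1, dif_pos h]
    ext; simp [Fin.val_rev]; omega
  · have h0 : ¬ ((i:ℕ) < m) := by omega
    have h1 : (Fin.rev i : ℕ) < m := by rw [Fin.val_rev]; omega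
    simp only [idx, dif_neg h0, dif_pos h1]
    ext; simp [Fin.val_rev]; omega

lemma rev_lt_iff {m : ℕ} (i : Fin (2*m)) : ((Fin.rev i : ℕ) < m) ↔ ¬ ((i:ℕ) < m) := by
  have := i.isLt; rw [Fin.val_rev]; omega

lemma lo_idx {m : ℕ} (i : Fin (2*m)) (h : (i:ℕ) < m) : lo m (idx i) = i := by
  simp [idx, lo, h]

lemma rev_lo_idx {m : ℕ} (i : Fin (2*m)) (h : ¬ ((i:ℕ) < m)) : Fin.rev (lo m (idx i)) = i := by
  have hi := i.isLt
  ext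
  simp only [idx, lo, dif_neg h, Fin.val_rev]
  omega

def pfun {m : ℕ} (e : Fin m → Fin m) (sw : Fin m → Bool) : Fin (2*m) → Fin (2*m) :=
  fun i =>
    let t := if sw (idx i) then Fin.rev (lo m (e (idx i))) else lo m (e (idx i))
    if (i:ℕ) < m then t else Fin.rev t

lemma pfun_rev {m : ℕ} (e : Fin m → Fin m) (sw : Fin m → Bool) (i : Fin (2*m)) :
    pfun e sw (Fin.rev i) = Fin.rev (pfun e sw i) := by
  have hi := i.isLt
  rcases lt_or_ge (i:ℕ) m with h | h
  · have h1 : ¬ ((Fin.rev i : ℕ) < m) := by rw [Fin.val_rev]; omega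
    simp only [pfun, idx_rev, if_neg h1, if_pos h]
  · have h0 : ¬ ((i:ℕ) < m) := by omega
    have h1 : (Fin.rev i : ℕ) < m := by rw [Fin.val_rev]; omega
    simp only [pfun, idx_rev, if_pos h1, if_neg h0, Fin.rev_rev]

lemma pfun_lo {m : ℕ} (e : Fin m → Fin m) (sw : Fin m → Bool) (j : Fin m) :
    pfun e sw (lo m j) = if sw j then Fin.rev (lo m (e j)) else lo m (e j) := by
  simp only [pfun, idx_lo, if_pos (lo_lt j)]

lemma pfun_comp {m : ℕ} (e e' : Fin m → Fin m) (sw sw' : Fin m → Bool)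
    (he : ∀ j, e' (e j) = j) (hsw : ∀ j, sw' (e j) = sw j) (i : Fin (2*m)) :
    pfun e' sw' (pfun e sw i) = i := by
  have key : ∀ j : Fin m, pfun e' sw' (pfun e sw (lo m j)) = lo m j := by
    intro j
    rw [pfun_lo]
    by_cases hs : sw j
    · rw [if_pos hs, pfun_rev, pfun_lo, hsw, if_pos hs, Fin.rev_rev, he]
    · rw [if_neg hs, pfun_lo, hsw, if_neg hs, he]
  rcases lt_or_ge (i:ℕ) m with h | h
  · have := key (idx i); rwa [lo_idx i h] at this
  · have h0 : ¬ ((i:ℕ) < m) := by omega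
    have := key (idx i)
    have h2 : pfun e' sw' (pfun e sw (Fin.rev (lo m (idx i)))) = Fin.rev (lo m (idx i)) := by
      rw [pfun_rev, pfun_rev, this]
    rwa [rev_lo_idx i h0] at h2

section Monomial
variable {k : Type*} [Field k] {m : ℕ}

lemma monomial_mul (π : Fin (2*m) → Fin (2*m)) (w : Fin (2*m) → k)
    (B : Matrix (Fin (2*m)) (Fin (2*m)) k) (i j : Fin (2*m)) :
    ((Matrix.of fun i j => if j = π i then w i else 0) * B) i j = w i * B (π i) j := by
  rw [Matrix.mul_apply]
  simp [ite_mul, Finset.sum_ite_eq']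

lemma mul_monomial_T (π : Fin (2*m) → Fin (2*m)) (w : Fin (2*m) → k)
    (B : Matrix (Fin (2*m)) (Fin (2*m)) k) (i j : Fin (2*m)) :
    (B * (Matrix.of fun i j => if j = π i then w i else 0)ᵀ) i j = B i (π j) * w j := by
  rw [Matrix.mul_apply]
  simp [Matrix.transpose_apply, mul_ite, Finset.sum_ite_eq']

end Monomial

lemma multiset_map_univ {α β : Type*} [Fintype α] (f : α → β) :
    Multiset.map f Finset.univ.val = ∑ i : α, ({f i} : Multiset β) := by
  rw [← Finset.sum_multiset_singleton]
  rw [show Multiset.map f = ⇑(Multiset.mapAddMonoidHom f) from rfl, map_sum]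
  simp

lemma map_perm_univ {α β : Type*} [Fintype α] [DecidableEq α] (f : α → β) (e : Equiv.Perm α) :
    Multiset.map (fun i => f (e i)) Finset.univ.val = Multiset.map f Finset.univ.val := by
  rw [multiset_map_univ, multiset_map_univ]
  exact Equiv.sum_comp e (fun i => ({f i} : Multiset β))

lemma exists_perm_of_map_eq {β : Type*} : ∀ {n : ℕ} (f g : Fin n → β),
    Multiset.map f Finset.univ.val = Multiset.map g Finset.univ.val →
    ∃ e : Equiv.Perm (Fin n), ∀ i, g i = f (e i) := by
  intro n
  induction n with
  | zero => intro f g _; exact ⟨1, fun i => i.elim0⟩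
  | succ n ih =>
    intro f g h
    have hmem : g (Fin.last n) ∈ Multiset.map f Finset.univ.val := by
      rw [h]
      exact Multiset.mem_map.2 ⟨Fin.last n, Finset.mem_univ _ |>.out, rfl⟩
    obtain ⟨y, -, hy⟩ := Multiset.mem_map.1 hmem
    set e₀ : Equiv.Perm (Fin (n+1)) := Equiv.swap y (Fin.last n) with he₀
    set f₁ : Fin (n+1) → β := fun i => f (e₀ i) with hf₁
    have hmap1 : Multiset.map f₁ Finset.univ.val = Multiset.map f Finset.univ.val :=
      map_perm_univ f e₀
    have hlast : f₁ (Fin.last n) = g (Fin.last n) := by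
      simp [hf₁, he₀, Equiv.swap_apply_right, hy]
    have hsplit : ∀ u : Fin (n+1) → β,
        Multiset.map u Finset.univ.val
          = u (Fin.last n) ::ₘ Multiset.map (fun i : Fin n => u i.castSucc) Finset.univ.val := by
      intro u
      rw [multiset_map_univ, multiset_map_univ, Fin.sum_univ_castSucc]
      rw [add_comm, Multiset.singleton_add]
    have h2 : Multiset.map (fun i : Fin n => f₁ i.castSucc) Finset.univ.val
        = Multiset.map (fun i : Fin n => g i.castSucc) Finset.univ.val := by
      have := hmap1.trans h
      rw [hsplit f₁, hsplit g, hlast] at this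
      exact (Multiset.cons_inj_right _).1 this
    obtain ⟨e', he'⟩ := ih _ _ h2
    refine ⟨(finSuccEquivLast.trans ((e'.optionCongr).trans finSuccEquivLast.symm)).trans e₀,
      fun i => ?_⟩
    refine Fin.lastCases ?_ (fun i => ?_) i
    · simpa [Equiv.optionCongr] using hlast.symm
    · simpa [Equiv.optionCongr] using he' i
section Forward
variable {k : Type*} [Field k] {m : ℕ}

lemma J0_transpose : (J0 k m)ᵀ = J0 k m := by
  ext i j
  simp only [Matrix.transpose_apply, J0, Matrix.of_apply]
  by_cases h : i = Fin.rev j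
  · subst h; simp
  · have h2 : ¬ (j = Fin.rev i) := fun hc => h (by simp [hc])
    simp [h, h2]

lemma J0_diag_J0 (v : Fin (2*m) → k) :
    J0 k m * Matrix.diagonal v * J0 k m = Matrix.diagonal (fun i => v (Fin.rev i)) := by
  ext i j
  rw [mul_J0_apply, J0_mul_apply]
  rcases eq_or_ne i j with rfl | hij
  · simp [Matrix.diagonal_apply_eq]
  · rw [Matrix.diagonal_apply_ne _ (fun hc => hij (Fin.rev_injective hc)),
      Matrix.diagonal_apply_ne _ hij]

/-- transpose of a unit of the matrix ring -/
def tU {n : Type*} [DecidableEq n] [Fintype n] {R : Type*} [CommRing R]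
    (g : (Matrix n n R)ˣ) : (Matrix n n R)ˣ :=
  ⟨g.valᵀ, g.invᵀ,
   by rw [← Matrix.transpose_mul, g.inv_val, Matrix.transpose_one],
   by rw [← Matrix.transpose_mul, g.val_inv, Matrix.transpose_one]⟩

lemma forward_multiset (a b : Fin m → kˣ) (g : (Matrix (Fin (2*m)) (Fin (2*m)) k)ˣ)
    (hg : g.val * (Matrix.diagonal fun i => (dvec a i : k)) *
        (J0 k m * g.valᵀ * J0 k m) = Matrix.diagonal fun i => (dvec b i : k)) :
    Multiset.map (fun i => (dvec a i : k)^2) Finset.univ.val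
      = Multiset.map (fun i => (dvec b i : k)^2) Finset.univ.val := by
  classical
  set M : Matrix (Fin (2*m)) (Fin (2*m)) k := g.val with hMdef
  let J' : (Matrix (Fin (2*m)) (Fin (2*m)) k)ˣ := ⟨J0 k m, J0 k m, J0_mul_J0, J0_mul_J0⟩
  let dA : (Matrix (Fin (2*m)) (Fin (2*m)) k)ˣ := diagGL (dvec a)
  let dB : (Matrix (Fin (2*m)) (Fin (2*m)) k)ˣ := diagGL (dvec b)
  let gT : (Matrix (Fin (2*m)) (Fin (2*m)) k)ˣ := tU g
  have hJval : J'.val = J0 k m := rfl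
  have hdAval : dA.val = Matrix.diagonal fun i => (dvec a i : k) := rfl
  have hdBval : dB.val = Matrix.diagonal fun i => (dvec b i : k) := rfl
  have hdAival : (dA⁻¹).val = Matrix.diagonal fun i => ((dvec a i)⁻¹ : k) := by
    show (Matrix.diagonal fun i => (((dvec a i)⁻¹ : kˣ) : k)) = _
    exact congrArg Matrix.diagonal (funext fun i => Units.val_inv_eq_inv_val _)
  have hdBival : (dB⁻¹).val = Matrix.diagonal fun i => ((dvec b i)⁻¹ : k) := by
    show (Matrix.diagonal fun i => (((dvec b i)⁻¹ : kˣ) : k)) = _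
    exact congrArg Matrix.diagonal (funext fun i => Units.val_inv_eq_inv_val _)
  have hgTval : gT.val = Mᵀ := rfl
  have E : (g * dA) * ((J' * gT) * J') = dB := by
    apply Units.ext
    simp only [Units.val_mul, hJval, hdAval, hdBval, hgTval]
    simp only [Matrix.mul_assoc] at hg ⊢
    exact hg
  have E2 : (J' * (g * J')) * (dA * gT) = dB := by
    apply Units.ext
    have hgt := congrArg Matrix.transpose hg
    simp only [Matrix.transpose_mul, Matrix.transpose_transpose, Matrix.diagonal_transpose,
      J0_transpose] at hgt
    simp only [Units.val_mul, hJval, hdAval, hdBval, hgTval]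
    simp only [Matrix.mul_assoc] at hgt ⊢
    exact hgt
  have hJ2 : J' * J' = 1 := by
    apply Units.ext
    simp only [Units.val_mul, hJval, Units.val_one]
    exact J0_mul_J0
  have hJ : J'⁻¹ = J' := inv_eq_of_mul_eq_one_right hJ2
  have hA : J' * dA * J' = dA⁻¹ := by
    apply Units.ext
    simp only [Units.val_mul, hJval, hdAval, hdAival]
    rw [J0_diag_J0]
    exact congrArg Matrix.diagonal (funext fun i => by
      rw [dvec_rev]; exact Units.val_inv_eq_inv_val _)
  have hB : J' * dB * J' = dB⁻¹ := by
    apply Units.ext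
    simp only [Units.val_mul, hJval, hdBval, hdBival]
    rw [J0_diag_J0]
    exact congrArg Matrix.diagonal (funext fun i => by
      rw [dvec_rev]; exact Units.val_inv_eq_inv_val _)
  have rB : J' * dB = dB⁻¹ * J' := by
    calc J' * dB = J' * dB * J' * J'⁻¹ := by group
    _ = dB⁻¹ * J' := by rw [hB, hJ]
  have rA2 : dA * J' = J' * dA⁻¹ := by
    calc dA * J' = J'⁻¹ * (J' * dA * J') := by group
    _ = J' * dA⁻¹ := by rw [hA, hJ]
  have hgTX : gT = J' * (dA⁻¹ * (g⁻¹ * (dB * J'))) := by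
    have h0 : gT = J'⁻¹ * (dA⁻¹ * (g⁻¹ * (dB * J'⁻¹))) := by
      rw [← E]; group
    rwa [hJ] at h0
  have hgTY : gT = dA⁻¹ * (J' * (g⁻¹ * (J' * dB))) := by
    have h0 : gT = dA⁻¹ * (J'⁻¹ * (g⁻¹ * (J'⁻¹ * dB))) := by
      rw [← E2]; group
    rwa [hJ] at h0
  have hsuff : gT * (dB * dB) = dA * (dA * gT) := by
    calc gT * (dB * dB)
        = J' * (dA⁻¹ * (g⁻¹ * (dB * ((J' * dB) * dB)))) := by rw [hgTX]; group
      _ = J' * (dA⁻¹ * (g⁻¹ * (dB * ((dB⁻¹ * J') * dB)))) := by rw [rB]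
      _ = (J' * dA⁻¹) * (g⁻¹ * (J' * dB)) := by group
      _ = (dA * J') * (g⁻¹ * (J' * dB)) := by rw [rA2]
      _ = dA * (dA * (dA⁻¹ * (J' * (g⁻¹ * (J' * dB))))) := by group
      _ = dA * (dA * gT) := by rw [← hgTY]
  have Ggoal : dB * dB = gT⁻¹ * ((dA * dA) * gT) := by
    have h1 : (dA * dA) * gT = gT * (dB * dB) := by rw [show (dA * dA) * gT = dA * (dA * gT) from by group, ← hsuff]
    rw [h1]; group
  -- pass to matrices
  set d1 : Fin (2*m) → k := fun i => (dvec a i : k)^2 with hd1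
  set d2 : Fin (2*m) → k := fun i => (dvec b i : k)^2 with hd2
  set Q : Matrix (Fin (2*m)) (Fin (2*m)) k := (gT⁻¹).val with hQdef
  have hQM : Q * Mᵀ = 1 := by
    have := congrArg Units.val (inv_mul_cancel gT)
    simpa only [Units.val_mul, Units.val_one, hgTval] using this
  have hMQ : Mᵀ * Q = 1 := by
    have := congrArg Units.val (mul_inv_cancel gT)
    simpa only [Units.val_mul, Units.val_one, hgTval] using this
  have hdiag : Matrix.diagonal d2 = Q * (Matrix.diagonal d1 * Mᵀ) := by
    have hv := congrArg Units.val Ggoal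
    simp only [Units.val_mul, hdBval, hdAval, hgTval, ← hQdef] at hv
    rw [Matrix.diagonal_mul_diagonal] at hv
    have eb : Matrix.diagonal d2 = Matrix.diagonal fun i => (dvec b i : k) * (dvec b i : k) :=
      congrArg Matrix.diagonal (funext fun i => by simp only [hd2]; ring)
    rw [eb, hv, Matrix.diagonal_mul_diagonal,
      show (fun i => (dvec a i : k) * (dvec a i : k)) = d1 from
        funext fun i => by simp only [hd1]; ring]
  -- characteristic polynomial argument over k[X]
  set C : k →+* Polynomial k := Polynomial.C with hCdef
  set A1 : Matrix (Fin (2*m)) (Fin (2*m)) (Polynomial k) :=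
    Matrix.diagonal fun i => (Polynomial.X - Polynomial.C (d1 i)) with hA1
  set A2 : Matrix (Fin (2*m)) (Fin (2*m)) (Polynomial k) :=
    Matrix.diagonal fun i => (Polynomial.X - Polynomial.C (d2 i)) with hA2
  set Q' : Matrix (Fin (2*m)) (Fin (2*m)) (Polynomial k) := Q.map C with hQ'
  set M'' : Matrix (Fin (2*m)) (Fin (2*m)) (Polynomial k) := (Mᵀ).map C with hM''
  have hmap1 : (1 : Matrix (Fin (2*m)) (Fin (2*m)) k).map (C : k → Polynomial k) = 1 :=
    Matrix.map_one _ (map_zero C) (map_one C)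
  have hQM' : Q' * M'' = 1 := by rw [hQ', hM'', ← Matrix.map_mul, hQM, hmap1]
  have e1 : A1 = (Matrix.diagonal fun _ : Fin (2*m) => (Polynomial.X : Polynomial k))
      - (Matrix.diagonal d1).map C := by
    rw [hA1, Matrix.diagonal_map (map_zero C), Matrix.diagonal_sub]
  have e2 : A2 = (Matrix.diagonal fun _ : Fin (2*m) => (Polynomial.X : Polynomial k))
      - (Matrix.diagonal d2).map C := by
    rw [hA2, Matrix.diagonal_map (map_zero C), Matrix.diagonal_sub]
  have hclaim : A2 = Q' * (A1 * M'') := by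
    rw [e1, Matrix.sub_mul, Matrix.mul_sub]
    have t1 : Q' * ((Matrix.diagonal fun _ : Fin (2*m) => (Polynomial.X : Polynomial k)) * M'')
        = Matrix.diagonal fun _ : Fin (2*m) => (Polynomial.X : Polynomial k) := by
      rw [← Matrix.smul_eq_diagonal_mul, mul_smul_comm, hQM']
      rw [Matrix.smul_eq_diagonal_mul, Matrix.mul_one]
    have t2 : Q' * ((Matrix.diagonal d1).map C * M'')
        = (Matrix.diagonal d2).map C := by
      rw [hQ', hM'', ← Matrix.map_mul, ← Matrix.map_mul, ← hdiag]
    rw [t1, t2, ← e2]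
  have hdet : A1.det = A2.det := by
    rw [hclaim, Matrix.det_mul, Matrix.det_mul]
    rw [show Q'.det * (A1.det * M''.det) = (Q'.det * M''.det) * A1.det from by ring,
      ← Matrix.det_mul, hQM', Matrix.det_one, one_mul]
  have hprod : (∏ i : Fin (2*m), (Polynomial.X - Polynomial.C (d1 i)))
      = ∏ i : Fin (2*m), (Polynomial.X - Polynomial.C (d2 i)) := by
    have g1 : A1.det = ∏ i : Fin (2*m), (Polynomial.X - Polynomial.C (d1 i)) := by
      rw [hA1, Matrix.det_diagonal]
    have g2 : A2.det = ∏ i : Fin (2*m), (Polynomial.X - Polynomial.C (d2 i)) := by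
      rw [hA2, Matrix.det_diagonal]
    rw [← g1, ← g2, hdet]
  have hms : Multiset.map d1 Finset.univ.val = Multiset.map d2 Finset.univ.val := by
    have h1 : ((Multiset.map d1 Finset.univ.val).map
        fun r => Polynomial.X - Polynomial.C r).prod
        = ∏ i : Fin (2*m), (Polynomial.X - Polynomial.C (d1 i)) := by
      rw [Multiset.map_map, Finset.prod_eq_multiset_prod]
      rfl
    have h2 : ((Multiset.map d2 Finset.univ.val).map
        fun r => Polynomial.X - Polynomial.C r).prod
        = ∏ i : Fin (2*m), (Polynomial.X - Polynomial.C (d2 i)) := by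
      rw [Multiset.map_map, Finset.prod_eq_multiset_prod]
      rfl
    have h3 := congrArg Polynomial.roots (h1.trans (hprod.trans h2.symm))
    rwa [Polynomial.roots_multiset_prod_X_sub_C, Polynomial.roots_multiset_prod_X_sub_C] at h3
  exact hms

end Forward
section Backward
variable {k : Type*} [Field k] {m : ℕ}

lemma exists_gl_of_data (a b : Fin m → kˣ) (π π' : Fin (2*m) → Fin (2*m)) (c : Fin (2*m) → kˣ)
    (hl : ∀ i, π' (π i) = i) (hr : ∀ i, π (π' i) = i)
    (hrev : ∀ i, π (Fin.rev i) = Fin.rev (π i))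
    (h3 : ∀ i, c i * c (Fin.rev i) * dvec a (π i) = dvec b i) :
    ∃ g : (Matrix (Fin (2*m)) (Fin (2*m)) k)ˣ,
      g.val * (Matrix.diagonal fun i => (dvec a i : k))
        * (J0 k m * (g.val)ᵀ * J0 k m)
        = Matrix.diagonal fun i => (dvec b i : k) := by
  classical
  set M : Matrix (Fin (2*m)) (Fin (2*m)) k :=
    Matrix.of fun i j => if j = π i then (c i : k) else 0 with hM
  set M' : Matrix (Fin (2*m)) (Fin (2*m)) k :=
    Matrix.of fun i j => if j = π' i then ((c (π' i) : kˣ) : k)⁻¹ else 0 with hM'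
  have hinj : Function.Injective π := fun x y hxy => by rw [← hl x, hxy, hl]
  have hMB : ∀ (B : Matrix (Fin (2*m)) (Fin (2*m)) k) i j,
      (M * B) i j = (c i : k) * B (π i) j := by
    intro B i j
    rw [hM]
    exact monomial_mul π _ B i j
  have hM'B : ∀ (B : Matrix (Fin (2*m)) (Fin (2*m)) k) i j,
      (M' * B) i j = ((c (π' i) : kˣ) : k)⁻¹ * B (π' i) j := by
    intro B i j
    rw [hM']
    exact monomial_mul π' _ B i j
  have hBMT : ∀ (B : Matrix (Fin (2*m)) (Fin (2*m)) k) i j,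
      (B * Mᵀ) i j = B i (π j) * (c j : k) := by
    intro B i j
    rw [hM]
    exact mul_monomial_T π _ B i j
  have hMM' : M * M' = 1 := by
    ext i j
    rw [hMB, hM']
    simp only [Matrix.of_apply, hl]
    rcases eq_or_ne j i with rfl | hij
    · simp [Matrix.one_apply]
    · simp [Matrix.one_apply, hij, Ne.symm hij]
  have hM'M : M' * M = 1 := by
    ext i j
    rw [hM'B, hM]
    simp only [Matrix.of_apply, hr]
    rcases eq_or_ne j i with rfl | hij
    · simp [Matrix.one_apply]
    · simp [Matrix.one_apply, hij, Ne.symm hij]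
  refine ⟨⟨M, M', hMM', hM'M⟩, ?_⟩
  show M * (Matrix.diagonal fun i => (dvec a i : k)) * (J0 k m * Mᵀ * J0 k m)
      = Matrix.diagonal fun i => (dvec b i : k)
  have hassoc : M * (Matrix.diagonal fun i => (dvec a i : k)) * (J0 k m * Mᵀ * J0 k m)
      = (((M * (Matrix.diagonal fun i => (dvec a i : k))) * J0 k m) * Mᵀ) * J0 k m := by
    simp only [Matrix.mul_assoc]
  rw [hassoc]
  ext i l
  rw [mul_J0_apply, hBMT, mul_J0_apply, hrev, Fin.rev_rev, Matrix.mul_diagonal, hM]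
  simp only [Matrix.of_apply]
  rcases eq_or_ne i l with rfl | hil
  · rw [if_pos rfl, Matrix.diagonal_apply_eq]
    have hcoe := congrArg (Units.val) (h3 i)
    simp only [Units.val_mul] at hcoe
    rw [← hcoe]; ring
  · rw [Matrix.diagonal_apply_ne _ hil,
      if_neg (fun hc : π l = π i => hil (hinj hc).symm)]
    ring

end Backward
section Comb
variable {k : Type*} [Field k] {m : ℕ}

/-- The setoid on `k` identifying `x` with `x⁻¹`. -/
def invSetoid (k : Type*) [Field k] : Setoid k where
  r x y := y = x ∨ y = x⁻¹
  iseqv := by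
    refine ⟨fun x => Or.inl rfl, ?_, ?_⟩
    · rintro x y (rfl | rfl)
      · exact Or.inl rfl
      · exact Or.inr (inv_inv x).symm
    · rintro x y z (rfl | rfl) (rfl | rfl)
      · exact Or.inl rfl
      · exact Or.inr rfl
      · exact Or.inr rfl
      · exact Or.inl (inv_inv x)

lemma invSetoid_mk_inv (x : k) :
    Quotient.mk (invSetoid k) x⁻¹ = Quotient.mk (invSetoid k) x :=
  Quotient.sound (Or.inr (inv_inv x).symm)

lemma dvec_sq_split (a : Fin m → kˣ) :
    (∑ i : Fin (2*m), ({Quotient.mk (invSetoid k) ((dvec a i : k)^2)} : Multiset (Quotient (invSetoid k))))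
      = (∑ j : Fin m, {Quotient.mk (invSetoid k) ((a j : k)^2)})
        + ∑ j : Fin m, {Quotient.mk (invSetoid k) ((a j : k)^2)} := by
  classical
  set q : k → Quotient (invSetoid k) := Quotient.mk (invSetoid k) with hq
  let φ : Fin m ⊕ Fin m ≃ Fin (2*m) := finSumFinEquiv.trans (finCongr (two_mul m).symm)
  rw [← Equiv.sum_comp φ (fun i => ({q ((dvec a i : k)^2)} : Multiset (Quotient (invSetoid k))))]
  rw [Fintype.sum_sum_type]
  congr 1
  · apply Finset.sum_congr rfl
    intro j _
    have hval : ((φ (Sum.inl j) : Fin (2*m)) : ℕ) = (j : ℕ) := by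
      simp [φ, finSumFinEquiv]
    have hlt : ((φ (Sum.inl j) : Fin (2*m)) : ℕ) < m := by rw [hval]; exact j.isLt
    rw [dvec_lt a _ hlt]
    rw [show (⟨((φ (Sum.inl j) : Fin (2*m)) : ℕ), hlt⟩ : Fin m) = j from Fin.ext hval]
  · have step : ∀ j : Fin m, dvec a (φ (Sum.inr j)) = (a (Fin.rev j))⁻¹ := by
      intro j
      have hval : ((φ (Sum.inr j) : Fin (2*m)) : ℕ) = (j : ℕ) + m := by
        simp [φ, finSumFinEquiv]
      have hnlt : ¬ ((φ (Sum.inr j) : Fin (2*m)) : ℕ) < m := by omega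
      simp only [dvec, dif_neg hnlt]
      congr 2
      ext
      simp only [hval, Fin.val_rev]
      have := j.isLt
      omega
    calc ∑ j : Fin m, ({q ((dvec a (φ (Sum.inr j)) : k)^2)} : Multiset (Quotient (invSetoid k)))
        = ∑ j : Fin m, ({q ((a (Fin.rev j) : k)^2)} : Multiset (Quotient (invSetoid k))) := by
          apply Finset.sum_congr rfl
          intro j _
          rw [step j]
          congr 1
          rw [hq]
          rw [show (((a (Fin.rev j))⁻¹ : kˣ) : k)^2 = (((a (Fin.rev j) : k))^2)⁻¹ by
            rw [Units.val_inv_eq_inv_val, inv_pow]]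
          exact invSetoid_mk_inv _
      _ = ∑ j : Fin m, ({q ((a j : k)^2)} : Multiset (Quotient (invSetoid k))) :=
          Equiv.sum_comp Fin.revPerm (fun j => ({q ((a j : k)^2)} : Multiset (Quotient (invSetoid k))))

lemma exists_perm_of_squares (a b : Fin m → kˣ)
    (h : Multiset.map (fun i => (dvec a i : k)^2) Finset.univ.val
        = Multiset.map (fun i => (dvec b i : k)^2) Finset.univ.val) :
    ∃ e : Equiv.Perm (Fin m), ∀ j,
      (b j : k)^2 = (a (e j) : k)^2 ∨ (b j : k)^2 = ((a (e j) : k)^2)⁻¹ := by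
  classical
  have h1 := congrArg (Multiset.map (Quotient.mk (invSetoid k))) h
  rw [Multiset.map_map, Multiset.map_map] at h1
  simp only [Function.comp] at h1
  rw [multiset_map_univ, multiset_map_univ] at h1
  have h2 := (dvec_sq_split a).symm.trans (h1.trans (dvec_sq_split b))
  have h3 : (∑ j : Fin m, ({Quotient.mk (invSetoid k) ((a j : k)^2)} : Multiset (Quotient (invSetoid k))))
      = ∑ j : Fin m, ({Quotient.mk (invSetoid k) ((b j : k)^2)} : Multiset (Quotient (invSetoid k))) := by
    ext x
    have := congrArg (Multiset.count x) h2
    simp only [Multiset.count_add] at this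
    omega
  rw [← multiset_map_univ, ← multiset_map_univ] at h3
  obtain ⟨e, he⟩ := exists_perm_of_map_eq _ _ h3
  refine ⟨e, fun j => ?_⟩
  have h5 : (a (e j) : k)^2 = (b j : k)^2 ∨ (a (e j) : k)^2 = ((b j : k)^2)⁻¹ :=
    Quotient.exact (he j)
  rcases h5 with h5 | h5
  · exact Or.inl h5.symm
  · right
    rw [h5, inv_inv]

end Comb
/-- in `GL_{2m}(k)⋊⟨σ⟩` with `σ` the twisted transpose-inverse
automorphism `g ↦ J₀ (gᵀ)⁻¹ J₀⁻¹`, two elements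
`diag(a₁,…,a_m,a_m⁻¹,…,a₁⁻¹)·σ` and `diag(b₁,…,b_m,b_m⁻¹,…,b₁⁻¹)·σ` are
`GL_{2m}(k)`-conjugate iff the eigenvalue data are related by permuting indices and
replacing each `aᵢ` by one of `aᵢ, aᵢ⁻¹, −aᵢ, −aᵢ⁻¹`. -/
theorem stmt18 {k : Type*} [Field k] [IsAlgClosed k] (hchar : (2 : k) ≠ 0) (m : ℕ)
    (σ : MulAut (GL (Fin (2 * m)) k))
    (hσ : ∀ g : GL (Fin (2 * m)) k,
      ((σ g : GL (Fin (2 * m)) k) : Matrix (Fin (2 * m)) (Fin (2 * m)) k)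
        = J0 k m *
            (((g⁻¹ : GL (Fin (2 * m)) k) : Matrix (Fin (2 * m)) (Fin (2 * m)) k))ᵀ *
            J0 k m)
    (ψ : Multiplicative (ZMod 2) →* MulAut (GL (Fin (2 * m)) k))
    (hψ : ψ (Multiplicative.ofAdd 1) = σ)
    (a b : Fin m → kˣ) :
    (∃ g : GL (Fin (2 * m)) k,
        inl g * (inl (diagGL (dvec a)) * inr (Multiplicative.ofAdd (1 : ZMod 2)))
            * (inl g)⁻¹
          = (inl (diagGL (dvec b)) * inr (Multiplicative.ofAdd (1 : ZMod 2)) :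
              GL (Fin (2 * m)) k ⋊[ψ] Multiplicative (ZMod 2)))
      ↔ ∃ e : Equiv.Perm (Fin m), ∀ i,
          b i = a (e i) ∨ b i = (a (e i))⁻¹ ∨ b i = -(a (e i)) ∨ b i = -(a (e i))⁻¹ := by
  classical
  constructor
  · rintro ⟨g, hg⟩
    rw [sdp_conj_iff, hψ] at hg
    have hσg := hσ g⁻¹
    rw [inv_inv] at hσg
    have hmat : (g : Matrix (Fin (2*m)) (Fin (2*m)) k)
        * (Matrix.diagonal fun i => (dvec a i : k))
        * (J0 k m * ((g : Matrix (Fin (2*m)) (Fin (2*m)) k))ᵀ * J0 k m)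
        = Matrix.diagonal fun i => (dvec b i : k) := by
      have hgm := congrArg Units.val hg
      simp only [Units.val_mul] at hgm
      rw [show ((σ g⁻¹ : GL (Fin (2*m)) k) : Matrix (Fin (2*m)) (Fin (2*m)) k)
          = J0 k m * ((g : Matrix (Fin (2*m)) (Fin (2*m)) k))ᵀ * J0 k m from hσg] at hgm
      exact hgm
    obtain ⟨e, he⟩ := exists_perm_of_squares a b (forward_multiset a b g hmat)
    refine ⟨e, fun j => ?_⟩
    rcases he j with h2 | h2
    · have h3 : (b j : k) = (a (e j) : k) ∨ (b j : k) = -(a (e j) : k) := by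
        rw [pow_two, pow_two] at h2
        exact mul_self_eq_mul_self_iff.mp h2
      rcases h3 with h3 | h3
      · exact Or.inl (Units.ext h3)
      · exact Or.inr (Or.inr (Or.inl (Units.ext (by rw [h3, Units.val_neg]))))
    · have h4 : (b j : k)^2 = ((a (e j) : k)⁻¹)^2 := by rw [h2, inv_pow]
      have h3 : (b j : k) = (a (e j) : k)⁻¹ ∨ (b j : k) = -((a (e j) : k)⁻¹) := by
        rw [pow_two, pow_two] at h4
        exact mul_self_eq_mul_self_iff.mp h4
      rcases h3 with h3 | h3
      · exact Or.inr (Or.inl (Units.ext (by rw [h3, ← Units.val_inv_eq_inv_val])))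
      · exact Or.inr (Or.inr (Or.inr (Units.ext
          (by rw [h3, Units.val_neg, Units.val_inv_eq_inv_val]))))
  · rintro ⟨e, he⟩
    set sw : Fin m → Bool := fun j => if b j = a (e j) ∨ b j = -(a (e j)) then false else true
      with hswdef
    set sg : Fin m → Bool := fun j =>
      if sw j then (if b j = -(a (e j))⁻¹ then true else false)
      else (if b j = -(a (e j)) then true else false) with hsgdef
    have key : ∀ j, b j = (if sg j then (-1 : kˣ) else 1)
        * (if sw j then (a (e j))⁻¹ else a (e j)) := by
      intro j
      by_cases h1 : b j = a (e j) ∨ b j = -(a (e j))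
      · have hsw : sw j = false := by simp only [hswdef, if_pos h1]
        by_cases h2 : b j = -(a (e j))
        · have hsg : sg j = true := by simp [hsgdef, hsw, h2]
          rw [hsg, hsw]
          simp only [if_pos rfl, Bool.false_eq_true, if_false, if_true]
          rw [h2, neg_one_mul]
        · have h3 : b j = a (e j) := h1.resolve_right h2
          have hsg : sg j = false := by simp [hsgdef, hsw, h2]
          rw [hsg, hsw]
          simp only [Bool.false_eq_true, if_false, one_mul]
          exact h3
      · have hsw : sw j = true := by simp only [hswdef, if_neg h1]
        have h4 : b j = (a (e j))⁻¹ ∨ b j = -(a (e j))⁻¹ := by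
          rcases he j with h | h | h | h
          · exact absurd (Or.inl h) h1
          · exact Or.inl h
          · exact absurd (Or.inr h) h1
          · exact Or.inr h
        by_cases h2 : b j = -(a (e j))⁻¹
        · have hsg : sg j = true := by simp [hsgdef, hsw, h2]
          rw [hsg, hsw]
          simp only [if_true]
          rw [h2, neg_one_mul]
        · have h3 : b j = (a (e j))⁻¹ := h4.resolve_right h2
          have hsg : sg j = false := by simp [hsgdef, hsw, h2]
          rw [hsg, hsw]
          simp only [Bool.false_eq_true, if_false, if_true, one_mul]
          exact h3
    obtain ⟨r, hr⟩ := IsAlgClosed.exists_pow_nat_eq (-1 : k) (n := 2) (by norm_num)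
    have hr0 : r ≠ 0 := by
      intro h0
      rw [h0, zero_pow (by norm_num : (2:ℕ) ≠ 0)] at hr
      exact (by norm_num : (0:k) ≠ -1) hr
    set ι : kˣ := Units.mk0 r hr0 with hιdef
    have hι : ι * ι = -1 := by
      apply Units.ext
      rw [Units.val_mul]
      show r * r = ((-1 : kˣ) : k)
      rw [← pow_two, hr]
      simp
    set c : Fin (2*m) → kˣ := fun i => if sg (idx i) then ι else 1 with hc
    have hcrev : ∀ i, c i * c (Fin.rev i) = if sg (idx i) then (-1:kˣ) else 1 := by
      intro i
      rw [hc]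
      simp only [idx_rev]
      by_cases hs : sg (idx i) <;> simp [hs, hι]
    set π : Fin (2*m) → Fin (2*m) := pfun (⇑e) sw with hπ
    set π' : Fin (2*m) → Fin (2*m) := pfun (⇑e.symm) (sw ∘ ⇑e.symm) with hπ'
    have hl : ∀ i, π' (π i) = i :=
      pfun_comp (⇑e) (⇑e.symm) sw (sw ∘ ⇑e.symm)
        (fun j => e.symm_apply_apply j) (fun j => by simp)
    have hr2 : ∀ i, π (π' i) = i :=
      pfun_comp (⇑e.symm) (⇑e) (sw ∘ ⇑e.symm) sw
        (fun j => e.apply_symm_apply j) (fun j => rfl)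
    have hrev : ∀ i, π (Fin.rev i) = Fin.rev (π i) := fun i => pfun_rev (⇑e) sw i
    have h3 : ∀ i, c i * c (Fin.rev i) * dvec a (π i) = dvec b i := by
      have hlo : ∀ j : Fin m,
          c (lo m j) * c (Fin.rev (lo m j)) * dvec a (π (lo m j)) = dvec b (lo m j) := by
        intro j
        rw [hcrev, idx_lo, hπ, pfun_lo]
        rw [dvec_lt b (lo m j) (lo_lt j)]
        rw [show (⟨((lo m j : Fin (2*m)) : ℕ), lo_lt j⟩ : Fin m) = j from Fin.ext rfl]
        by_cases hs : sw j
        · rw [if_pos hs, dvec_rev, dvec_lt a _ (lo_lt (e j)),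
            show (⟨((lo m (e j) : Fin (2*m)) : ℕ), lo_lt (e j)⟩ : Fin m) = e j from Fin.ext rfl,
            key j, if_pos hs]
        · rw [if_neg hs, dvec_lt a _ (lo_lt (e j)),
            show (⟨((lo m (e j) : Fin (2*m)) : ℕ), lo_lt (e j)⟩ : Fin m) = e j from Fin.ext rfl,
            key j, if_neg hs]
      have hsign : ∀ i, (c i * c (Fin.rev i))⁻¹ = c i * c (Fin.rev i) := by
        intro i
        rw [hcrev]
        by_cases hs : sg (idx i) <;> simp [hs]
      intro i
      rcases lt_or_ge (i:ℕ) m with h | h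
      · have := hlo (idx i)
        rwa [lo_idx i h] at this
      · have h0 : ¬ ((i:ℕ) < m) := by omega
        have hi : Fin.rev (lo m (idx i)) = i := rev_lo_idx i h0
        rw [← hi, Fin.rev_rev, hrev, dvec_rev, dvec_rev, ← hlo (idx i), mul_inv, hsign,
          mul_comm (c (Fin.rev (lo m (idx i)))) (c (lo m (idx i)))]
    obtain ⟨g0, hg0⟩ := exists_gl_of_data a b π π' c hl hr2 hrev h3
    refine ⟨g0, ?_⟩
    rw [sdp_conj_iff, hψ]
    apply Units.ext
    simp only [Units.val_mul]
    have hσg := hσ g0⁻¹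
    rw [inv_inv] at hσg
    rw [show ((σ g0⁻¹ : GL (Fin (2*m)) k) : Matrix (Fin (2*m)) (Fin (2*m)) k)
        = J0 k m * ((g0 : Matrix (Fin (2*m)) (Fin (2*m)) k))ᵀ * J0 k m from hσg]
    exact hg0
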